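/- For every real γ > 0 and every integer t ≥ 1 there exist sum-of-squares polynomials σ_∅, σ_A, σ_B, σ_{AB} ∈ ℝ[A, B] and a polynomial λ ∈ ℝ[A, B] such that, as an identity of polynomials in ℝ[A, B], ((t−1)·γ·A + γ^{−(t−1)}·B^t)/t − A·B = σ_∅ + σ_A·A + σ_B·B + σ_{AB}·A·B + λ·(A^2 − A), with every summand of total degree at most t + 2. In particular, any reals A, B with A^2 = A and A ≥ 0, B ≥ 0 satisfy A·B ≤ ((t−1)·γ·A + γ^{−(t−1)}·B^t)/t. -/
import Mathlib


open MvPolynomial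

/-- A multivariate real polynomial is a sum of squares. -/
def IsSOS {σ : Type} (p : MvPolynomial σ ℝ) : Prop :=
  ∃ (k : ℕ) (r : Fin k → MvPolynomial σ ℝ), p = ∑ i, r i ^ 2

lemma isSOS_zero {σ : Type} : IsSOS (0 : MvPolynomial σ ℝ) := ⟨0, ![], by simp⟩

lemma isSOS_sq {σ : Type} (p : MvPolynomial σ ℝ) : IsSOS (p ^ 2) := ⟨1, ![p], by simp⟩

lemma isSOS_add {σ : Type} {p q : MvPolynomial σ ℝ} (hp : IsSOS p) (hq : IsSOS q) :
    IsSOS (p + q) := by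
  obtain ⟨k, r, rfl⟩ := hp
  obtain ⟨l, s, rfl⟩ := hq
  exact ⟨k + l, Fin.addCases r s, by rw [Fin.sum_univ_add]; simp⟩

lemma isSOS_mul_sq {σ : Type} {p : MvPolynomial σ ℝ} (q : MvPolynomial σ ℝ)
    (hp : IsSOS p) : IsSOS (q ^ 2 * p) := by
  obtain ⟨k, r, rfl⟩ := hp
  exact ⟨k, fun i => q * r i, by rw [Finset.mul_sum]; simp [mul_pow]⟩

lemma C_eq_sq {σ : Type} {c : ℝ} (hc : 0 ≤ c) :
    (C c : MvPolynomial σ ℝ) = (C (Real.sqrt c)) ^ 2 := by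
  rw [← map_pow, Real.sq_sqrt hc]

lemma isSOS_C_mul {σ : Type} {c : ℝ} (hc : 0 ≤ c) {p : MvPolynomial σ ℝ}
    (hp : IsSOS p) : IsSOS (C c * p) := by
  rw [C_eq_sq hc]; exact isSOS_mul_sq _ hp

lemma isSOS_C_mul_sq {σ : Type} {c : ℝ} (hc : 0 ≤ c) (q : MvPolynomial σ ℝ) :
    IsSOS (C c * q ^ 2) := by
  rw [C_eq_sq hc, ← mul_pow]; exact isSOS_sq _

lemma isSOS_eval_nonneg {σ : Type} {p : MvPolynomial σ ℝ} (hp : IsSOS p) (x : σ → ℝ) :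
    0 ≤ eval x p := by
  obtain ⟨k, r, rfl⟩ := hp
  rw [map_sum]
  exact Finset.sum_nonneg fun i _ => by rw [map_pow]; positivity

/-- Univariate AM–GM sum-of-squares certificate:
`(n)γ^{n+1} + B^{n+1} - (n+1)γ^n B = s0 + s1·B` with `s0, s1` SOS. -/
lemma amgm_key (γ : ℝ) (hγ : 0 ≤ γ) : ∀ n : ℕ, ∃ s0 s1 : MvPolynomial (Fin 2) ℝ,
    IsSOS s0 ∧ IsSOS s1 ∧
    C ((n : ℝ) * γ ^ (n + 1)) + (X 1) ^ (n + 1)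
      = s0 + s1 * X 1 + C (((n : ℝ) + 1) * γ ^ n) * X 1 ∧
    s0.totalDegree ≤ n + 1 ∧ s1.totalDegree ≤ n := by
  intro n
  induction n using Nat.strong_induction_on with
  | _ n ih =>
    match n with
    | 0 =>
      refine ⟨0, 0, isSOS_zero, isSOS_zero, ?_, by simp, by simp⟩
      simp
    | 1 =>
      refine ⟨(X 1 - C γ) ^ 2, 0, isSOS_sq _, isSOS_zero, ?_, ?_, by simp⟩
      · push_cast
        simp only [map_mul, map_pow, map_add, map_one]
        ring
      · calc ((X 1 - C γ : MvPolynomial (Fin 2) ℝ) ^ 2).totalDegree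
            ≤ 2 * (X 1 - C γ : MvPolynomial (Fin 2) ℝ).totalDegree := totalDegree_pow _ _
          _ ≤ 2 * 1 := by
              gcongr
              exact le_trans (totalDegree_sub _ _) (by simp [totalDegree_X])
          _ = 2 := rfl
    | (m + 2) =>
      obtain ⟨s0, s1, hs0, hs1, hI, hd0, hd1⟩ := ih m (by omega)
      have hsub : (X 1 - C γ : MvPolynomial (Fin 2) ℝ).totalDegree ≤ 1 := by
        exact le_trans (totalDegree_sub _ _) (by simp [totalDegree_X])
      have hsq : ((X 1 - C γ : MvPolynomial (Fin 2) ℝ) ^ 2).totalDegree ≤ 2 := by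
        calc _ ≤ 2 * (X 1 - C γ : MvPolynomial (Fin 2) ℝ).totalDegree := totalDegree_pow _ _
          _ ≤ 2 * 1 := by gcongr
          _ = 2 := rfl
      refine ⟨(X 1) ^ 2 * s0 + C (((m : ℝ) + 2) * γ ^ (m + 1)) * (X 1 - C γ) ^ 2,
              (X 1) ^ 2 * s1 + C (((m : ℝ) + 1) * γ ^ m) * (X 1 - C γ) ^ 2,
              isSOS_add (isSOS_mul_sq _ hs0) (isSOS_C_mul_sq (by positivity) _),
              isSOS_add (isSOS_mul_sq _ hs1) (isSOS_C_mul_sq (by positivity) _),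
              ?_, ?_, ?_⟩
      · push_cast
        simp only [map_mul, map_pow, map_add, map_one, map_ofNat] at hI ⊢
        linear_combination ((X 1 : MvPolynomial (Fin 2) ℝ) ^ 2) * hI
      · refine le_trans (totalDegree_add _ _) (max_le ?_ ?_)
        · refine le_trans (totalDegree_mul _ _) ?_
          have : ((X 1 : MvPolynomial (Fin 2) ℝ) ^ 2).totalDegree ≤ 2 := by
            simpa using totalDegree_pow (X 1 : MvPolynomial (Fin 2) ℝ) 2
          omega
        · refine le_trans (totalDegree_mul _ _) ?_
          simp only [totalDegree_C, zero_add]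
          omega
      · refine le_trans (totalDegree_add _ _) (max_le ?_ ?_)
        · refine le_trans (totalDegree_mul _ _) ?_
          have : ((X 1 : MvPolynomial (Fin 2) ℝ) ^ 2).totalDegree ≤ 2 := by
            simpa using totalDegree_pow (X 1 : MvPolynomial (Fin 2) ℝ) 2
          omega
        · refine le_trans (totalDegree_mul _ _) ?_
          simp only [totalDegree_C, zero_add]
          omega

/-- Parity splitting: `c·B^m·(1−A)²` is `σe + σB·B` with `σe, σB` SOS. -/
lemma parity_lemma (c : ℝ) (hc : 0 ≤ c) (m : ℕ) :
    ∃ σe σB : MvPolynomial (Fin 2) ℝ, IsSOS σe ∧ IsSOS σB ∧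
      σe + σB * X 1 = C c * (X 1) ^ m * (1 - X 0) ^ 2 ∧
      σe.totalDegree ≤ m + 2 ∧ (σB * X 1).totalDegree ≤ m + 2 := by
  have hdX : ∀ k : ℕ, ((C (Real.sqrt c) * (X 1) ^ k * (1 - X 0) :
      MvPolynomial (Fin 2) ℝ)).totalDegree ≤ k + 1 := by
    intro k
    refine le_trans (totalDegree_mul _ _) ?_
    have h1 : ((C (Real.sqrt c) * (X 1) ^ k : MvPolynomial (Fin 2) ℝ)).totalDegree ≤ k := by
      refine le_trans (totalDegree_mul _ _) ?_
      simp only [totalDegree_C, zero_add]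
      exact le_trans (totalDegree_pow _ _) (by simp [totalDegree_X])
    have h2 : ((1 - X 0 : MvPolynomial (Fin 2) ℝ)).totalDegree ≤ 1 :=
      le_trans (totalDegree_sub _ _) (by simp [totalDegree_X])
    omega
  rcases Nat.even_or_odd m with ⟨k, hk⟩ | ⟨k, hk⟩
  · refine ⟨(C (Real.sqrt c) * (X 1) ^ k * (1 - X 0)) ^ 2, 0, isSOS_sq _, isSOS_zero,
      ?_, ?_, by simp⟩
    · subst hk; rw [C_eq_sq hc]; ring
    · refine le_trans (totalDegree_pow _ _) ?_
      have := hdX k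
      omega
  · refine ⟨0, (C (Real.sqrt c) * (X 1) ^ k * (1 - X 0)) ^ 2, isSOS_zero, isSOS_sq _,
      ?_, by simp, ?_⟩
    · subst hk; rw [C_eq_sq hc]; ring
    · refine le_trans (totalDegree_mul _ _) ?_
      have h := le_trans (totalDegree_pow _ _) (by have := hdX k; omega :
        2 * ((C (Real.sqrt c) * (X 1) ^ k * (1 - X 0) : MvPolynomial (Fin 2) ℝ)).totalDegree
          ≤ 2 * (k + 1))
      simp only [totalDegree_X]
      omega

/-- Sum-of-squares certificate of
`{A ≥ 0, B ≥ 0, A² = A} ⊢ A·B ≤ ((t−1)γA + γ^{−(t−1)}B^t)/t`: an identity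
`((t−1)γA + γ^{−(t−1)}B^t)/t − A·B = σ_∅ + σ_A·A + σ_B·B + σ_{AB}·A·B + λ·(A² − A)`
with SOS multipliers and all summands of total degree at most `t + 2`. Here the
variables of `ℝ[A,B]` are `A = X 0` and `B = X 1`. -/
theorem stmt_13 (γ : ℝ) (hγ : 0 < γ) (t : ℕ) (ht : 1 ≤ t) :
    ∃ σe σA σB σAB lam : MvPolynomial (Fin 2) ℝ,
      IsSOS σe ∧ IsSOS σA ∧ IsSOS σB ∧ IsSOS σAB ∧
      (MvPolynomial.C (((t : ℝ) - 1) * γ / t) * X 0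
          + MvPolynomial.C ((γ ^ (t - 1))⁻¹ / t) * (X 1) ^ t
          - X 0 * X 1
        = σe + σA * X 0 + σB * X 1 + σAB * (X 0 * X 1)
          + lam * ((X 0) ^ 2 - X 0)) ∧
      σe.totalDegree ≤ t + 2 ∧
      (σA * X 0).totalDegree ≤ t + 2 ∧
      (σB * X 1).totalDegree ≤ t + 2 ∧
      (σAB * (X 0 * X 1)).totalDegree ≤ t + 2 ∧
      (lam * ((X 0) ^ 2 - X 0)).totalDegree ≤ t + 2 ∧
      (∀ a b : ℝ, a ^ 2 = a → 0 ≤ a → 0 ≤ b →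
        a * b ≤ (((t : ℝ) - 1) * γ * a + b ^ t / γ ^ (t - 1)) / t) := by
  obtain ⟨n, rfl⟩ : ∃ n, t = n + 1 := ⟨t - 1, (Nat.succ_pred_eq_of_pos ht).symm⟩
  set c : ℝ := (γ ^ n)⁻¹ / ((n : ℝ) + 1) with hc_def
  have hγ0 : (0 : ℝ) ≤ γ := hγ.le
  have hγn : (0 : ℝ) < γ ^ n := pow_pos hγ n
  have hn1 : (0 : ℝ) < (n : ℝ) + 1 := by positivity
  have hc : 0 ≤ c := by positivity
  obtain ⟨s0, s1, hs0, hs1, hkey, hd0, hd1⟩ := amgm_key γ hγ0 n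
  obtain ⟨σe, σB, hse, hsB, hpar, hde, hdB⟩ := parity_lemma c hc (n + 1)
  have hmain : (MvPolynomial.C ((((n + 1 : ℕ) : ℝ) - 1) * γ / ((n + 1 : ℕ) : ℝ)) * X 0
          + MvPolynomial.C ((γ ^ ((n + 1) - 1))⁻¹ / ((n + 1 : ℕ) : ℝ)) * (X 1) ^ (n + 1)
          - X 0 * X 1
        = σe + (C c * s0) * X 0 + σB * X 1 + (C c * s1) * (X 0 * X 1)
          + (-(C c * (X 1) ^ (n + 1))) * ((X 0) ^ 2 - X 0)) := by
    have hE1 : C ((((n + 1 : ℕ) : ℝ) - 1) * γ / ((n + 1 : ℕ) : ℝ))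
        = (C c * C ((n : ℝ) * γ ^ (n + 1)) : MvPolynomial (Fin 2) ℝ) := by
      rw [← map_mul]
      congr 1
      push_cast
      rw [hc_def]
      field_simp
      ring
    have hE2 : C ((γ ^ (n + 1 - 1))⁻¹ / ((n + 1 : ℕ) : ℝ))
        = (C c : MvPolynomial (Fin 2) ℝ) := by
      congr 1
      rw [hc_def]
      push_cast
      simp
    have hC1 : (C c * C (((n : ℝ) + 1) * γ ^ n) : MvPolynomial (Fin 2) ℝ) = 1 := by
      rw [← map_mul, ← map_one (C : ℝ →+* MvPolynomial (Fin 2) ℝ)]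
      congr 1
      rw [hc_def]
      field_simp
    linear_combination (-1 : MvPolynomial (Fin 2) ℝ) * hpar + C c * X 0 * hkey
      + X 0 * X 1 * hC1 + X 0 * hE1 + (X 1) ^ (n + 1) * hE2
  refine ⟨σe, C c * s0, σB, C c * s1, -(C c * (X 1) ^ (n + 1)),
    hse, isSOS_C_mul hc hs0, hsB, isSOS_C_mul hc hs1, hmain, hde, ?_, hdB, ?_, ?_, ?_⟩
  · -- (C c * s0 * X 0).totalDegree ≤ n + 1 + 2
    refine le_trans (totalDegree_mul _ _) ?_
    have h1 : (C c * s0 : MvPolynomial (Fin 2) ℝ).totalDegree ≤ n + 1 :=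
      le_trans (totalDegree_mul _ _) (by simp only [totalDegree_C, zero_add]; exact hd0)
    have h2 : (X 0 : MvPolynomial (Fin 2) ℝ).totalDegree ≤ 1 := le_of_eq (totalDegree_X _)
    omega
  · -- (C c * s1 * (X 0 * X 1)).totalDegree ≤ n + 1 + 2
    refine le_trans (totalDegree_mul _ _) ?_
    have h1 : (C c * s1 : MvPolynomial (Fin 2) ℝ).totalDegree ≤ n :=
      le_trans (totalDegree_mul _ _) (by simp only [totalDegree_C, zero_add]; exact hd1)
    have h2 : (X 0 * X 1 : MvPolynomial (Fin 2) ℝ).totalDegree ≤ 2 :=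
      le_trans (totalDegree_mul _ _) (by simp [totalDegree_X])
    omega
  · -- lam * (X0^2 - X0)
    rw [neg_mul, totalDegree_neg]
    refine le_trans (totalDegree_mul _ _) ?_
    have h1 : (C c * (X 1) ^ (n + 1) : MvPolynomial (Fin 2) ℝ).totalDegree ≤ n + 1 := by
      refine le_trans (totalDegree_mul _ _) ?_
      simp only [totalDegree_C, zero_add]
      exact le_trans (totalDegree_pow _ _) (by simp [totalDegree_X])
    have h2 : ((X 0) ^ 2 - X 0 : MvPolynomial (Fin 2) ℝ).totalDegree ≤ 2 := by
      refine le_trans (totalDegree_sub _ _) (max_le ?_ ?_)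
      · exact le_trans (totalDegree_pow _ _) (by simp [totalDegree_X])
      · simp [totalDegree_X]
    omega
  · -- numeric inequality
    intro a b ha2 ha hb
    have hE := congrArg (eval ![a, b]) hmain
    have h1 := isSOS_eval_nonneg hse ![a, b]
    have h2 := isSOS_eval_nonneg (isSOS_C_mul hc hs0) ![a, b]
    have h3 := isSOS_eval_nonneg hsB ![a, b]
    have h4 := isSOS_eval_nonneg (isSOS_C_mul hc hs1) ![a, b]
    simp only [map_add, map_sub, map_mul, map_pow, map_neg, eval_C, eval_X,
      Matrix.cons_val_zero, Matrix.cons_val_one, Matrix.head_cons] at hE h2 h4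
    have hz : eval ![a, b] (-(C c * (X 1) ^ (n + 1))) * (a ^ 2 - a) = 0 := by
      rw [ha2]; ring
    simp only [map_neg, map_mul, map_pow, eval_C, eval_X, Matrix.cons_val_zero,
      Matrix.cons_val_one, Matrix.head_cons] at hz
    have hle : a * b ≤ (((n + 1 : ℕ) : ℝ) - 1) * γ / ((n + 1 : ℕ) : ℝ) * a
        + (γ ^ ((n + 1) - 1))⁻¹ / ((n + 1 : ℕ) : ℝ) * b ^ (n + 1) := by
      nlinarith [mul_nonneg h2 ha, mul_nonneg h3 hb, mul_nonneg h4 (mul_nonneg ha hb), h1, hE, hz]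
    have heq : ((((n + 1 : ℕ) : ℝ) - 1) * γ * a + b ^ (n + 1) / γ ^ ((n + 1) - 1))
          / ((n + 1 : ℕ) : ℝ)
        = (((n + 1 : ℕ) : ℝ) - 1) * γ / ((n + 1 : ℕ) : ℝ) * a
          + (γ ^ ((n + 1) - 1))⁻¹ / ((n + 1 : ℕ) : ℝ) * b ^ (n + 1) := by
      simp only [Nat.add_sub_cancel]
      push_cast
      field_simp
    rw [heq]
    exact hle
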